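/- arXiv:2206.04583 — 6 statements merged into one kernel-verified Lean document; each statement's English description precedes it below -/
import Mathlib

section
/- Fix a real number $s_t > 0$ and an integer $\ell \ge 2$. Consider real numbers $x_1, \dots, x_\ell$ satisfying $\sum_{i=1}^{\ell} x_i \ge s_t$ and $1 \le x_i \le s_t/2$ for all $i$. Then $\sum_{1 \le i < j \le \ell} x_i x_j \ge s_t^2/8$. -/
open Finset

/-- the QP(ℓ) lower bound: if `∑ x i ≥ s_t` and `1 ≤ x i ≤ s_t/2`
for all `i` (with `ℓ ≥ 2`, `s_t > 0`), then `∑_{i<j} x i x j ≥ s_t²/8`. -/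
theorem stmt2 (st : ℝ) (hst : 0 < st) (ℓ : ℕ) (hℓ : 2 ≤ ℓ) (x : Fin ℓ → ℝ)
    (hsum : st ≤ ∑ i, x i) (hx : ∀ i, 1 ≤ x i ∧ x i ≤ st / 2) :
    st ^ 2 / 8 ≤ ∑ i : Fin ℓ, ∑ j ∈ Finset.univ.filter (fun j => i < j), x i * x j := by
  set S := ∑ i, x i with hS
  have hsq : ∑ i, (x i) ^ 2 ≤ st / 2 * S := by
    rw [hS, Finset.mul_sum]
    refine Finset.sum_le_sum fun i _ => ?_
    nlinarith [(hx i).1, (hx i).2]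
  have swap : ∑ i : Fin ℓ, ∑ j ∈ Finset.univ.filter (fun j => j < i), x i * x j
      = ∑ i : Fin ℓ, ∑ j ∈ Finset.univ.filter (fun j => i < j), x i * x j := by
    rw [Finset.sum_comm' (t' := Finset.univ)
      (s' := fun j => Finset.univ.filter (fun i => j < i)) (by simp)]
    simp [mul_comm]
  have split : ∀ i : Fin ℓ, ∑ j, x i * x j
      = x i ^ 2 + ((∑ j ∈ Finset.univ.filter (fun j => j < i), x i * x j)
        + ∑ j ∈ Finset.univ.filter (fun j => i < j), x i * x j) := by
    intro i
    have h1 : (Finset.univ : Finset (Fin ℓ))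
        = insert i ((Finset.univ.filter (fun j => j < i)) ∪ (Finset.univ.filter (fun j => i < j))) := by
      ext j
      simp only [Finset.mem_insert, Finset.mem_union, Finset.mem_filter,
        Finset.mem_univ, true_and, iff_true]
      have := lt_trichotomy j i
      tauto
    conv_lhs => rw [h1]
    rw [Finset.sum_insert, Finset.sum_union]
    · ring
    · rw [Finset.disjoint_filter]
      intro a _ ha hb
      exact absurd (ha.trans hb) (lt_irrefl a)
    · simp
  have key : S ^ 2 = ∑ i, (x i) ^ 2
      + 2 * ∑ i : Fin ℓ, ∑ j ∈ Finset.univ.filter (fun j => i < j), x i * x j := by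
    have : S ^ 2 = ∑ i, ∑ j, x i * x j := by
      rw [sq, hS, Finset.sum_mul_sum]
    rw [this]
    rw [Finset.sum_congr rfl fun i _ => split i]
    rw [Finset.sum_add_distrib, Finset.sum_add_distrib, swap]
    ring
  nlinarith [hsq, key, hsum, hst, sq_nonneg (S - st)]
end

section
/- Let $T$ be a finite set partitioned by a true clustering $T^*$ and let $\tilde{T}$ be another clustering of $T$ (both viewed as clustering functions). Suppose some true cluster $T_1^* \subseteq T$ has $|T_1^*| > s_t$, and suppose every cluster of $\tilde{T}$ has size at most $s_t/2$ (so in particular intersects $T_1^*$ in at most $s_t/2$ points). Then $d(\tilde{T}, T^*) > s_t^2/8$, where $d$ counts the number of unordered pairs on which the two clustering functions disagree. -/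
open Finset

/-- Number of unordered pairs (u<v) on which two clusterings (given by label
functions `f`, `g`) disagree. -/
def disag (n : ℕ) (f g : Fin n → ℕ) : ℕ :=
  (Finset.univ.filter (fun e : Fin n × Fin n =>
    e.1 < e.2 ∧ ¬((f e.1 = f e.2) ↔ (g e.1 = g e.2)))).card

/-
A true cluster `C` of size `m > s_t` has `m²` ordered pairs. Since every cluster of the other
clustering meets `C` in at most `s_t/2` points, at most `m · s_t/2` of them are joined by it, so
more than `m (m - s_t/2) > s_t²/2` ordered pairs of `C` are split, i.e. more than `s_t²/4`
unordered ones, and each of these is a negative mistake.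
-/

section PairCounting

variable {α β : Type*}

theorem card_filter_eq_le_card_mul [DecidableEq β] (s : Finset α) (f : α → β) (k : ℕ)
    (hk : ∀ u ∈ s, #(s.filter fun v => f u = f v) ≤ k) :
    #((s ×ˢ s).filter fun e => f e.1 = f e.2) ≤ #s * k := by
  rw [card_filter, sum_product]
  simpa only [← card_filter, smul_eq_mul] using sum_le_card_nsmul s _ k hk

theorem card_mul_card_le_card_filter_ne_add [DecidableEq β] (s : Finset α) (f : α → β) (k : ℕ)
    (hk : ∀ u ∈ s, #(s.filter fun v => f u = f v) ≤ k) :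
    #s * #s ≤ #((s ×ˢ s).filter fun e => f e.1 ≠ f e.2) + #s * k := by
  have hsplit := card_filter_add_card_filter_not (s := s ×ˢ s) (fun e => f e.1 = f e.2)
  rw [card_product] at hsplit
  simp only [← ne_eq] at hsplit
  have := card_filter_eq_le_card_mul s f k hk
  omega

theorem card_eq_two_mul_card_filter_lt [LinearOrder α] (s : Finset (α × α))
    (hswap : ∀ e ∈ s, e.swap ∈ s) (hdiag : ∀ e ∈ s, e.1 ≠ e.2) :
    #s = 2 * #(s.filter fun e => e.1 < e.2) := by
  have hswapped : #(s.filter fun e => ¬e.1 < e.2) = #(s.filter fun e => e.1 < e.2) := by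
    refine card_nbij' Prod.swap Prod.swap ?_ ?_ (fun e _ => e.swap_swap) (fun e _ => e.swap_swap)
    · intro e he
      simp only [coe_filter, Set.mem_ofPred_eq, not_lt] at he ⊢
      exact ⟨hswap e he.1, lt_of_le_of_ne he.2 (hdiag e he.1).symm⟩
    · intro e he
      simp only [coe_filter, Set.mem_ofPred_eq, not_lt] at he ⊢
      exact ⟨hswap e he.1, he.2.le⟩
  rw [← card_filter_add_card_filter_not (fun e : α × α => e.1 < e.2), hswapped]
  ring

end PairCounting

/-- if some true cluster has size `> s_t` and every cluster of the
other clustering has size `≤ s_t/2`, then the two clusterings disagree on more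
than `s_t²/8` unordered pairs. -/
theorem stmt3 (n : ℕ) (st : ℝ) (tstar ttil : Fin n → ℕ) (a : ℕ)
    (hbig : st < ((Finset.univ.filter (fun v => tstar v = a)).card : ℝ))
    (hsmall : ∀ b : ℕ, ((Finset.univ.filter (fun v => ttil v = b)).card : ℝ) ≤ st / 2) :
    st ^ 2 / 8 < (disag n ttil tstar : ℝ) := by
  set C := univ.filter fun v => tstar v = a
  set P := (C ×ˢ C).filter fun e => ttil e.1 ≠ ttil e.2
  have hst : 0 ≤ st := by linarith [hsmall 0, Nat.cast_nonneg (α := ℝ) #(univ.filter fun v => ttil v = 0)]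
  have hfiber : ∀ u ∈ C, #(C.filter fun v => ttil u = ttil v) ≤ ⌊st / 2⌋₊ := fun u _ =>
    Nat.le_floor <| (Nat.cast_le.2 <| card_le_card <| filter_subset_filter _ (subset_univ C)).trans
      (by simpa only [eq_comm] using hsmall (ttil u))
  have hsplit := card_mul_card_le_card_filter_ne_add C ttil _ hfiber
  have hP : #P = 2 * #(P.filter fun e => e.1 < e.2) := by
    refine card_eq_two_mul_card_filter_lt P (fun e he => ?_) (fun e he h => ?_) <;>
      simp only [P, mem_filter, mem_product] at he
    · simpa only [P, mem_filter, mem_product] using ⟨he.1.symm, Ne.symm he.2⟩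
    · exact he.2 (congrArg ttil h)
  have hmistakes : #(P.filter fun e => e.1 < e.2) ≤ disag n ttil tstar := by
    refine card_le_card fun e he => ?_
    simp only [P, C, mem_filter, mem_product, mem_univ, true_and] at he ⊢
    exact ⟨he.2, fun h => he.1.2 (h.2 (he.1.1.1.trans he.1.1.2.symm))⟩
  have hfloor : (⌊st / 2⌋₊ : ℝ) ≤ st / 2 := Nat.floor_le (by positivity)
  have hsplitR : (#C : ℝ) * #C ≤ 2 * disag n ttil tstar + #C * ⌊st / 2⌋₊ := by
    rw [hP] at hsplit; exact_mod_cast hsplit.trans (by gcongr)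
  nlinarith [mul_le_mul_of_nonneg_left hfloor (hst.trans hbig.le)]
end

section
/- Let $T$ be a finite set with true clustering $T^*$ into clusters $T_1^*, \dots, T_k^*$, and let $\tilde{T}$ be a clustering of $T$. Let $p \in (0,1/2)$, $\eta = 1/4 + p/2$, and $s_t > 0$. Suppose some cluster $\tilde{T}_i$ of $\tilde{T}$ satisfies $|\tilde{T}_i| > s_t/2$ and $\tilde{T}_i$ is $\eta$-bad, i.e., for every true cluster $T_j^*$, $|\tilde{T}_i \cap T_j^*| < (1/2 + \eta)|\tilde{T}_i|$. Then $d(\tilde{T}, T^*) > (1-2p)s_t^2/64$. -/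
open Finset

/-- if a cluster `T̃_b` of `ttil` has size `> s_t/2` and is
`η`-bad with `η = 1/4 + p/2` (it intersects every true cluster in fewer than
`(1/2+η)|T̃_b|` points), then `d(ttil, tstar) > (1-2p)s_t²/64`. -/
theorem stmt4 (n : ℕ) (p η st : ℝ) (hp : 0 < p ∧ p < 1/2) (hη : η = 1/4 + p/2)
    (hst : 0 < st) (tstar ttil : Fin n → ℕ) (b : ℕ)
    (hbig : st / 2 < ((Finset.univ.filter (fun v => ttil v = b)).card : ℝ))
    (hbad : ∀ j : ℕ,
      ((Finset.univ.filter (fun v => ttil v = b ∧ tstar v = j)).card : ℝ)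
        < (1/2 + η) * ((Finset.univ.filter (fun v => ttil v = b)).card : ℝ)) :
    (1 - 2*p) * st ^ 2 / 64 < (disag n ttil tstar : ℝ) := by
  obtain ⟨hp0, hp2⟩ := hp
  set B : Finset (Fin n) := Finset.univ.filter (fun v => ttil v = b) with hB
  set m : ℕ := B.card with hm
  have hm0 : (0:ℝ) < (m:ℝ) := lt_trans (by linarith) hbig
  have hBne : B.Nonempty := Finset.card_pos.mp (by exact_mod_cast hm0)
  set S : ℕ := ∑ u ∈ B, (B.filter (fun v => tstar u = tstar v)).card with hSdef
  have hS : (S:ℝ) < (m:ℝ) * ((3/4 + p/2) * m) := by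
    have : (S:ℝ) = ∑ u ∈ B, ((B.filter (fun v => tstar u = tstar v)).card : ℝ) := by
      push_cast [hSdef]; ring
    rw [this]
    have hsum : ∑ u ∈ B, ((B.filter (fun v => tstar u = tstar v)).card : ℝ)
        < ∑ _u ∈ B, (3/4 + p/2) * (m:ℝ) := by
      apply Finset.sum_lt_sum_of_nonempty hBne
      intro u _
      have hfib : B.filter (fun v => tstar u = tstar v)
          = Finset.univ.filter (fun v => ttil v = b ∧ tstar v = tstar u) := by
        rw [hB, Finset.filter_filter]
        apply Finset.filter_congr
        intro v _
        simp [eq_comm, and_comm]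
      rw [hfib]
      have := hbad (tstar u)
      rw [hη] at this
      calc ((Finset.univ.filter (fun v => ttil v = b ∧ tstar v = tstar u)).card : ℝ)
          < (1/2 + (1/4 + p/2)) * ((Finset.univ.filter (fun v => ttil v = b)).card : ℝ) := this
        _ = (3/4 + p/2) * (m:ℝ) := by rw [← hB, ← hm]; ring
    calc ∑ u ∈ B, ((B.filter (fun v => tstar u = tstar v)).card : ℝ)
        < ∑ _u ∈ B, (3/4 + p/2) * (m:ℝ) := hsum
      _ = (m:ℝ) * ((3/4 + p/2) * m) := by rw [Finset.sum_const, ← hm]; ring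
  -- pair counting
  set P : Finset (Fin n × Fin n) :=
    (B ×ˢ B).filter (fun e => ¬ tstar e.1 = tstar e.2) with hPdef
  have hPeq : ((B ×ˢ B).filter (fun e => tstar e.1 = tstar e.2)).card = S := by
    rw [hSdef]
    rw [Finset.card_filter]
    rw [Finset.sum_product]
    congr 1
    ext u
    rw [Finset.card_filter]
  have hsplit : S + P.card = m * m := by
    rw [← hPeq, hPdef]
    rw [Finset.card_filter_add_card_filter_not]
    rw [Finset.card_product, hm]
  set D : Finset (Fin n × Fin n) := P.filter (fun e => e.1 < e.2) with hDdef
  set D2 : Finset (Fin n × Fin n) := P.filter (fun e => ¬ e.1 < e.2) with hD2def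
  have hDsplit : D.card + D2.card = P.card := by
    rw [hDdef, hD2def]; exact Finset.card_filter_add_card_filter_not _
  have hPsymm : ∀ e : Fin n × Fin n, e ∈ P → e.swap ∈ P := by
    intro e he
    rw [hPdef, Finset.mem_filter, Finset.mem_product] at he ⊢
    exact ⟨⟨he.1.2, he.1.1⟩, fun h => he.2 h.symm⟩
  have hne : ∀ e : Fin n × Fin n, e ∈ P → e.1 ≠ e.2 := by
    intro e he
    rw [hPdef, Finset.mem_filter] at he
    intro h; exact he.2 (by rw [h])
  have hD2card : D2.card = D.card := by
    apply Finset.card_bij (fun e _ => Prod.swap e)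
    · intro e he
      rw [hD2def, Finset.mem_filter] at he
      rw [hDdef, Finset.mem_filter]
      refine ⟨hPsymm e he.1, ?_⟩
      have := hne e he.1
      have h2 : e.2 < e.1 := lt_of_le_of_ne (not_lt.mp he.2) (fun h => this h.symm)
      exact h2
    · intro a ha b hb h
      exact Prod.swap_injective h
    · intro e he
      rw [hDdef, Finset.mem_filter] at he
      refine ⟨e.swap, ?_, by simp⟩
      rw [hD2def, Finset.mem_filter]
      exact ⟨hPsymm e he.1, not_lt.mpr (le_of_lt he.2)⟩
  have hP2D : P.card = 2 * D.card := by omega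
  have hle : D.card ≤ disag n ttil tstar := by
    apply Finset.card_le_card
    intro e he
    rw [hDdef, Finset.mem_filter, hPdef, Finset.mem_filter, Finset.mem_product, hB] at he
    obtain ⟨⟨⟨h1, h2⟩, hts⟩, hlt⟩ := he
    rw [Finset.mem_filter] at h1 h2
    simp only [disag, Finset.mem_filter]
    refine ⟨Finset.mem_univ _, hlt, ?_⟩
    intro hiff
    exact hts (hiff.mp (by rw [h1.2, h2.2]))
  -- final arithmetic
  have hcast : ((S:ℝ) + 2 * (D.card:ℝ)) = (m:ℝ) * m := by
    have h1 : (S:ℝ) + (P.card:ℝ) = (m:ℝ)*m := by exact_mod_cast hsplit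
    have h2 : (P.card:ℝ) = 2*(D.card:ℝ) := by exact_mod_cast hP2D
    linarith
  have hDr : (D.card : ℝ) ≤ (disag n ttil tstar : ℝ) := by exact_mod_cast hle
  nlinarith [sq_nonneg ((m:ℝ) - st/2), mul_pos hm0 hm0, sq_nonneg (st/2), mul_pos hst hst,
    mul_lt_mul_of_pos_left hbig hm0, mul_lt_mul_of_pos_right hbig hst]
end

section
/- Let $T$ be a finite set with true clustering $T^*$, let $\eta \in (0,1/2]$, $p \in (0,1/2)$ with $\eta \ge 1/4$, and $s_t > 0$. Suppose $\tilde{T}$ is a clustering of $T$ containing two distinct clusters $\tilde{T}_i \ne \tilde{T}_j$, both of size greater than $s_t/2$, such that for some true cluster $V_\ell^*$, both $\tilde{T}_i$ and $\tilde{T}_j$ are $(\eta, V_\ell^*)$-biased sets. Then $d(\tilde{T}, T^*) > s_t^2/16$. -/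
open Finset

/-
Every point of `T̃_i ∩ V*_ℓ` and every point of `T̃_j ∩ V*_ℓ` are together in `T*` but apart
in `T̃`, so `d(T̃, T*) ≥ |T̃_i ∩ V*_ℓ| · |T̃_j ∩ V*_ℓ|`. A biased set meets `V*_ℓ` in at least
half of its points, so both factors exceed `s_t / 4`.
-/

/-- Sorting the pair injects `A ×ˢ B` into the disagreements, since `A` and `B` are disjoint. -/
theorem card_mul_card_le_disag {n : ℕ} {f g : Fin n → ℕ} {A B : Finset (Fin n)}
    (hsplit : ∀ a ∈ A, ∀ b ∈ B, f a ≠ f b ∧ g a = g b) :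
    #A * #B ≤ disag n f g := by
  rw [← card_product]
  refine card_le_card_of_injOn (fun e => if e.1 < e.2 then e else e.swap) ?_ ?_
  · rintro ⟨a, b⟩ hab
    obtain ⟨ha, hb⟩ := mem_product.mp hab
    obtain ⟨hf, hg⟩ := hsplit a ha b hb
    have hne : a ≠ b := fun h => hf (congrArg f h)
    rcases hne.lt_or_gt with hlt | hgt
    · simp [hlt, hf, hg]
    · simp [hgt, hgt.not_gt, Ne.symm hf, hg]
  · have hdisj : ∀ x ∈ A, x ∉ B := fun x hxA hxB => (hsplit x hxA x hxB).1 rfl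
    rintro ⟨a, b⟩ hab ⟨a', b'⟩ hab' heq
    simp only [coe_product, Set.mem_prod, mem_coe] at hab hab'
    dsimp only at heq
    split_ifs at heq <;> simp_all [Prod.swap]

theorem quarter_lt_of_half_lt_of_biased {s η x y : ℝ} (hη : 0 ≤ η) (hx₀ : 0 ≤ x)
    (hx : s / 2 < x) (hbias : (1 / 2 + η) * x ≤ y) : s / 4 < y := by
  nlinarith [mul_nonneg hη hx₀]

theorem stmt5_general (n : ℕ) (η st : ℝ)
    (hη : 0 < η ∧ η ≤ 1/2) (hst : 0 < st)
    (tstar ttil : Fin n → ℕ) (b₁ b₂ ℓ : ℕ) (hb : b₁ ≠ b₂)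
    (hbig₁ : st / 2 < ((Finset.univ.filter (fun v => ttil v = b₁)).card : ℝ))
    (hbig₂ : st / 2 < ((Finset.univ.filter (fun v => ttil v = b₂)).card : ℝ))
    (hbias₁ : (1/2 + η) * ((Finset.univ.filter (fun v => ttil v = b₁)).card : ℝ)
      ≤ ((Finset.univ.filter (fun v => ttil v = b₁ ∧ tstar v = ℓ)).card : ℝ))
    (hbias₂ : (1/2 + η) * ((Finset.univ.filter (fun v => ttil v = b₂)).card : ℝ)
      ≤ ((Finset.univ.filter (fun v => ttil v = b₂ ∧ tstar v = ℓ)).card : ℝ)) :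
    st ^ 2 / 16 < (disag n ttil tstar : ℝ) := by
  set A := univ.filter (fun v => ttil v = b₁ ∧ tstar v = ℓ)
  set B := univ.filter (fun v => ttil v = b₂ ∧ tstar v = ℓ)
  have hA : st / 4 < #A := quarter_lt_of_half_lt_of_biased hη.1.le (by positivity) hbig₁ hbias₁
  have hB : st / 4 < #B := quarter_lt_of_half_lt_of_biased hη.1.le (by positivity) hbig₂ hbias₂
  have hAB : #A * #B ≤ disag n ttil tstar := card_mul_card_le_disag fun a haA b hbB => by
    simp only [A, B, mem_filter, mem_univ, true_and] at haA hbB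
    exact ⟨by rw [haA.1, hbB.1]; exact hb, by rw [haA.2, hbB.2]⟩
  calc st ^ 2 / 16 = (st / 4) * (st / 4) := by ring
    _ < #A * #B := mul_lt_mul'' hA hB (by positivity) (by positivity)
    _ ≤ disag n ttil tstar := by exact_mod_cast hAB

/-- if two distinct clusters `T̃_{b₁}, T̃_{b₂}` of `ttil`, both of
size `> s_t/2`, are both `(η, V*_ℓ)`-biased for the same true cluster `V*_ℓ`
(with `η ≥ 1/4`), then `d(ttil, tstar) > s_t²/16`. -/
theorem stmt5 (n : ℕ) (p η st : ℝ) (hp : 0 < p ∧ p < 1/2)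
    (hη : 0 < η ∧ η ≤ 1/2) (hη4 : 1/4 ≤ η) (hst : 0 < st)
    (tstar ttil : Fin n → ℕ) (b₁ b₂ ℓ : ℕ) (hb : b₁ ≠ b₂)
    (hbig₁ : st / 2 < ((Finset.univ.filter (fun v => ttil v = b₁)).card : ℝ))
    (hbig₂ : st / 2 < ((Finset.univ.filter (fun v => ttil v = b₂)).card : ℝ))
    (hbias₁ : (1/2 + η) * ((Finset.univ.filter (fun v => ttil v = b₁)).card : ℝ)
      ≤ ((Finset.univ.filter (fun v => ttil v = b₁ ∧ tstar v = ℓ)).card : ℝ))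
    (hbias₂ : (1/2 + η) * ((Finset.univ.filter (fun v => ttil v = b₂)).card : ℝ)
      ≤ ((Finset.univ.filter (fun v => ttil v = b₂ ∧ tstar v = ℓ)).card : ℝ)) :
    st ^ 2 / 16 < (disag n ttil tstar : ℝ) :=
  stmt5_general n η st hη hst tstar ttil b₁ b₂ ℓ hb hbig₁ hbig₂ hbias₁ hbias₂
end

section
/- Let $p \in (0,1/2)$, $\eta \in (p, 1/2]$, and let $B$ be an $(\eta, V_i^*)$-biased finite set with $|B| \ge \max\{\frac{80 \log n}{\eta^2(1-2p)^2}, \frac{5 \log n}{(\eta - p)^2}\}$. Under the semi-random oracle model (each query independently corrupted with probability $p$, corrupted answers adversarial), for any fixed point $v$: if $v \in V_i^*$ then $\Pr[\sum_{u \in B} \mathcal{O}(u,v) < |B|/2] \le n^{-10}$, and if $v \notin V_i^*$ then $\Pr[\sum_{u \in B} \mathcal{O}(u,v) \ge |B|/2] \le n^{-10}$. -/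
/-!
Misclassifying `v` requires many corrupted queries: an uncorrupted answer is the true
indicator `[c u = c v]`, so the vote differs from the true count `#{u ∈ B | c u = c v}` by at most
the number of corrupted queries. By the bias of `B`, the true count is at least `(1/2 + η)|B|` if `c v = i`
and at most `(1/2 - η)|B|` otherwise, so either misclassification forces at least `η|B|`
corruptions. The corruptions are independent Bernoulli(`p`) trials, and Hoeffding's inequality
bounds the probability of that by `exp (-2 (η - p)² |B|)`, which is at most `n⁻¹⁰` once
`|B| ≥ 5 log n / (η - p)²`.
-/

open Finset MeasureTheory
open scoped ENNReal

/-- Bernoulli measure on `Bool`: `true` (corrupted) with probability `q`. -/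
noncomputable def bern (q : ℝ) : Measure Bool :=
  ENNReal.ofReal q • Measure.dirac true + ENNReal.ofReal (1 - q) • Measure.dirac false

open ProbabilityTheory Real

section Bernoulli

variable {q : ℝ}

lemma isProbabilityMeasure_bern (hq0 : 0 ≤ q) (hq1 : q ≤ 1) : IsProbabilityMeasure (bern q) :=
  ⟨by simp [bern, ← ENNReal.ofReal_add hq0 (sub_nonneg.2 hq1)]⟩

lemma integral_bern (hq0 : 0 ≤ q) (hq1 : q ≤ 1) (f : Bool → ℝ) :
    ∫ b, f b ∂bern q = q * f true + (1 - q) * f false := by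
  rw [bern, integral_add_measure, integral_smul_measure, integral_smul_measure, integral_dirac,
    integral_dirac, ENNReal.toReal_ofReal hq0, ENNReal.toReal_ofReal (sub_nonneg.2 hq1),
    smul_eq_mul, smul_eq_mul]
  all_goals exact Integrable.of_finite.smul_measure ENNReal.ofReal_ne_top

lemma hasSubgaussianMGF_bern (hq0 : 0 ≤ q) (hq1 : q ≤ 1) :
    HasSubgaussianMGF (fun b : Bool => (if b then 1 else 0 : ℝ) - q) (1 / 4) (bern q) := by
  have := isProbabilityMeasure_bern hq0 hq1
  have h := hasSubgaussianMGF_of_mem_Icc_of_integral_eq_zero (μ := bern q) (a := -q) (b := 1 - q)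
    (X := fun b : Bool => (if b then 1 else 0 : ℝ) - q) (by fun_prop) (ae_of_all _ ?_) ?_
  · convert h
    norm_num
  · intro b
    cases b <;> simp
  · rw [integral_bern hq0 hq1]
    simp only [↓reduceIte, Bool.false_eq_true]
    ring

lemma pi_bern_measure_card_filter_ge_le {ι : Type*} [Fintype ι] (s : Finset ι) {r : ℝ}
    (hq0 : 0 ≤ q) (hqr : q ≤ r) (hq1 : q ≤ 1) :
    Measure.pi (fun _ : ι => bern q) {ω | r * #s ≤ #{u ∈ s | ω u}}
      ≤ ENNReal.ofReal (exp (-(2 * (r - q) ^ 2 * #s))) := by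
  have := isProbabilityMeasure_bern hq0 hq1
  set μ := Measure.pi fun _ : ι => bern q
  set X : Bool → ℝ := fun b => (if b then 1 else 0 : ℝ) - q
  have hindep : iIndepFun (fun u ω => X (ω u)) μ :=
    iIndepFun_pi fun _ => (measurable_of_finite X).aemeasurable
  have hsubG : ∀ u ∈ s, HasSubgaussianMGF (fun ω => X (ω u)) (1 / 4) μ := by
    intro u _
    refine HasSubgaussianMGF.of_map (X := X) (measurable_pi_apply u).aemeasurable ?_
    rw [(measurePreserving_eval _ u).map_eq]
    exact hasSubgaussianMGF_bern hq0 hq1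
  have hoeff := HasSubgaussianMGF.measure_sum_ge_le_of_iIndepFun hindep hsubG
    (ε := (r - q) * #s) (by nlinarith [sub_nonneg.2 hqr, (#s).cast_nonneg (α := ℝ)])
  have hset : {ω : ι → Bool | r * #s ≤ #{u ∈ s | ω u}}
      = {ω | (r - q) * #s ≤ ∑ u ∈ s, X (ω u)} := by
    ext ω
    simp only [Set.mem_ofPred_eq, X, sum_sub_distrib, sum_boole, sum_const, nsmul_eq_mul]
    constructor <;> intro h <;> linarith
  rw [hset, ← ofReal_measureReal]
  refine ENNReal.ofReal_le_ofReal (hoeff.trans_eq ?_)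
  rcases eq_or_ne (#s : ℝ) 0 with h | h
  · simp [h]
  · congr 1
    push_cast
    rw [sum_const, nsmul_eq_mul]
    field_simp
    ring

end Bernoulli

lemma ofReal_exp_neg_le_inv_pow (n k : ℕ) {a : ℝ} (ha : k * log n ≤ a) :
    ENNReal.ofReal (exp (-a)) ≤ (n : ℝ≥0∞)⁻¹ ^ k := by
  rcases Nat.eq_zero_or_pos n with rfl | hn
  · rcases Nat.eq_zero_or_pos k with rfl | hk
    · simpa using ha
    · simp [ENNReal.top_pow hk.ne']
  · have hn' : (0 : ℝ) < n := Nat.cast_pos.2 hn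
    calc ENNReal.ofReal (exp (-a)) ≤ ENNReal.ofReal (exp (-(k * log n))) :=
          ENNReal.ofReal_le_ofReal (exp_le_exp.2 (neg_le_neg ha))
      _ = (n : ℝ≥0∞)⁻¹ ^ k := by
          rw [exp_neg, exp_nat_mul, exp_log hn', ← inv_pow, ENNReal.ofReal_pow (by positivity),
            ENNReal.ofReal_inv_of_pos hn', ENNReal.ofReal_natCast]

lemma abs_sum_sub_card_filter_le_card_filter {ι : Type*} (s : Finset ι) (ω : ι → Bool)
    {a : ι → ℕ} {P : ι → Prop} [DecidablePred P] (ha1 : ∀ u, a u ≤ 1)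
    (ha : ∀ u, ω u = false → a u = if P u then 1 else 0) :
    |∑ u ∈ s, (a u : ℝ) - #{u ∈ s | P u}| ≤ #{u ∈ s | ω u} := by
  rw [← sum_boole, ← sum_boole, ← sum_sub_distrib]
  refine (abs_sum_le_sum_abs _ _).trans (sum_le_sum fun u _ => ?_)
  cases hωu : ω u
  · simp [ha u hωu]
  · have := ha1 u
    rw [if_pos rfl]
    interval_cases a u <;> split_ifs <;> norm_num

lemma card_filter_add_card_filter_le_card {ι : Type*} [DecidableEq ι] (s : Finset ι)
    {P Q : ι → Prop} [DecidablePred P] [DecidablePred Q] (hPQ : ∀ u ∈ s, P u → ¬Q u) :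
    #{u ∈ s | P u} + #{u ∈ s | Q u} ≤ #s := by
  rw [← card_union_of_disjoint (disjoint_filter.2 hPQ)]
  exact card_le_card (union_subset (filter_subset _ _) (filter_subset _ _))

/-- DegreeTest correctness (Lemma 1's tail bounds).  Points are
clustered via labels `c`; `B` is `(η,V_i^*)`-biased and large enough.  Each
query `(u,v)` is corrupted independently with probability `p` (pattern `ω`);
on uncorrupted queries the oracle `O` answers the true same-cluster indicator,
on corrupted ones its 0/1 answer is arbitrary (adversarial, may depend on the
whole corruption pattern).  Then the misclassification probability is `≤ n⁻¹⁰`. -/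
theorem stmt7 (n N : ℕ) (p η : ℝ) (hp : 0 < p ∧ p < 1/2) (hη : p < η ∧ η ≤ 1/2)
    (c : Fin N → ℕ) (i : ℕ) (B : Finset (Fin N)) (v : Fin N)
    (hbias : (1/2 + η) * (B.card : ℝ)
      ≤ ((B.filter (fun u => c u = i)).card : ℝ))
    (hB : max (80 * Real.log n / (η^2 * (1 - 2*p)^2))
              (5 * Real.log n / (η - p)^2) ≤ (B.card : ℝ))
    (O : (Fin N → Bool) → Fin N → ℕ)
    (hO01 : ∀ ω u, O ω u ≤ 1)
    (hOtrue : ∀ ω u, ω u = false → O ω u = if c u = c v then 1 else 0)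
    (μ : Measure (Fin N → Bool))
    (hμ : μ = Measure.pi (fun _ => bern p)) :
    (c v = i →
      μ {ω | (∑ u ∈ B, (O ω u : ℝ)) < (B.card : ℝ)/2} ≤ ((n : ℝ≥0∞))⁻¹ ^ 10)
    ∧ (c v ≠ i →
      μ {ω | (B.card : ℝ)/2 ≤ ∑ u ∈ B, (O ω u : ℝ)} ≤ ((n : ℝ≥0∞))⁻¹ ^ 10) := by
  obtain ⟨hp_pos, hp_lt⟩ := hp
  have hlog : (10 : ℕ) * log n ≤ 2 * (η - p) ^ 2 * #B := by
    have := (div_le_iff₀ (by nlinarith)).1 ((le_max_right _ _).trans hB)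
    push_cast
    linarith
  have htail : μ {ω | η * #B ≤ #{u ∈ B | ω u}} ≤ (n : ℝ≥0∞)⁻¹ ^ 10 := hμ ▸
    (pi_bern_measure_card_filter_ge_le B hp_pos.le hη.1.le (by linarith)).trans
      (ofReal_exp_neg_le_inv_pow n 10 hlog)
  have hdev ω := abs_le.1 <| abs_sum_sub_card_filter_le_card_filter B ω (hO01 ω) (hOtrue ω)
  constructor
  · intro hvi
    refine (measure_mono fun ω hω => ?_).trans htail
    have := (hdev ω).1
    simp only [Set.mem_ofPred_eq, hvi] at hω this ⊢
    linarith
  · intro hvi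
    refine (measure_mono fun ω hω => ?_).trans htail
    have hcount : (#{u ∈ B | c u = c v} : ℝ) + #{u ∈ B | c u = i} ≤ #B := by
      exact_mod_cast card_filter_add_card_filter_le_card B
        fun u _ (hv : c u = c v) (hi : c u = i) => hvi (hv ▸ hi)
    have := (hdev ω).2
    simp only [Set.mem_ofPred_eq] at hω ⊢
    linarith
end

section
/- Let $S$ be a finite set with $|S| \ge \frac{320 \log n}{(1-2p)^2}$ and $p \in (0,1/2)$, $n \ge |S|$. Assign to each unordered pair $(u,v)$ in $S$ an independent random weight $w_{uv}$ with $w_{uv} \ge x_{uv}$ pointwise, where $x_{uv} = 1$ with probability $1-p$ and $x_{uv} = -1$ with probability $p$, independently. Then with probability at least $1 - 1/\mathrm{poly}(n)$, every nonempty proper subset $A \subseteq S$ satisfies $\sum_{u \in A}\sum_{v \in S\setminus A} w_{uv} > 0$; i.e., $S$ has no nonpositive cut. -/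
/-!
Write `x_e = ±1` for the baseline weight of a pair (`-1` iff it is corrupted). Since `w ≥ x`,
it suffices to show that every cut `(A, S \ A)` has positive baseline weight. The cut contains
`j (s - j)` pairs, `j = |A|`, `s = |S|`, and by the Chernoff bound with the optimal tilt its
baseline weight is nonpositive with probability at most `(2 √(p (1 - p)))^{j (s - j)} ≤
exp (-(1 - 2p)² j (s - j) / 2)`. With `u = min j (s - j)` we have `j (s - j) ≥ s u / 2`, so
together with the `C(s, j) ≤ s^u` cuts of size `j` this contributes at most `(s y)^u ≤ s y`,
where `y = exp (-(1 - 2p)² s / 4) ≤ n⁻⁴`. A union bound over the `s + 1` sizes gives `1/n`.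
-/

open Finset MeasureTheory ProbabilityTheory
open scoped ENNReal

def baselineWeight (b : Bool) : ℝ := if b then -1 else 1

lemma isProbabilityMeasure_bern_s8 {q : ℝ} (h0 : 0 ≤ q) (h1 : q ≤ 1) :
    IsProbabilityMeasure (bern q) := by
  constructor
  simp [bern, ← ENNReal.ofReal_add h0 (sub_nonneg.2 h1)]

lemma mgf_baselineWeight_bern {q : ℝ} (h0 : 0 ≤ q) (h1 : q ≤ 1) (t : ℝ) :
    mgf baselineWeight (bern q) t = q * Real.exp (-t) + (1 - q) * Real.exp t := by
  rw [mgf, bern, integral_add_measure (.smul_measure .of_finite ENNReal.ofReal_ne_top)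
    (.smul_measure .of_finite ENNReal.ofReal_ne_top), integral_smul_measure,
    integral_smul_measure, integral_dirac, integral_dirac]
  simp [baselineWeight, h0, sub_nonneg.2 h1]

-- `exp t = √(p (1 - p)) / (1 - p)` is the tilt minimising the moment generating function.
lemma mul_exp_neg_log_add_mul_exp_log {p : ℝ} (hp0 : 0 < p) (hp1 : p < 1) :
    p * Real.exp (-Real.log (√(p * (1 - p)) / (1 - p)))
      + (1 - p) * Real.exp (Real.log (√(p * (1 - p)) / (1 - p))) = 2 * √(p * (1 - p)) := by
  have hq : 0 < 1 - p := by linarith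
  have hd : 0 < √(p * (1 - p)) := Real.sqrt_pos.2 (by positivity)
  have hd2 : √(p * (1 - p)) ^ 2 = p * (1 - p) := Real.sq_sqrt (by positivity)
  rw [Real.exp_neg, Real.exp_log (by positivity)]
  field_simp
  nlinarith [hd2]

lemma two_mul_sqrt_mul_one_sub_le_exp (p : ℝ) :
    2 * √(p * (1 - p)) ≤ Real.exp (-(1 - 2 * p) ^ 2 / 2) := by
  calc 2 * √(p * (1 - p)) = √(1 - (1 - 2 * p) ^ 2) := by
        rw [show 1 - (1 - 2 * p) ^ 2 = 2 ^ 2 * (p * (1 - p)) by ring,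
          Real.sqrt_mul (by norm_num : (0 : ℝ) ≤ 2 ^ 2), Real.sqrt_sq (by norm_num)]
    _ ≤ √(Real.exp (-(1 - 2 * p) ^ 2 / 2) ^ 2) := by
        gcongr
        rw [← Real.exp_nat_mul, Nat.cast_ofNat, mul_div_cancel₀ _ two_ne_zero]
        linarith [Real.add_one_le_exp (-(1 - 2 * p) ^ 2)]
    _ = Real.exp (-(1 - 2 * p) ^ 2 / 2) := Real.sqrt_sq (Real.exp_nonneg _)

lemma measure_sum_baselineWeight_nonpos_le {ι : Type*} [Fintype ι] {p : ℝ} (hp0 : 0 < p)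
    (hp : p ≤ 1 / 2) (E : Finset ι) :
    Measure.pi (fun _ : ι => bern p) {ω | ∑ e ∈ E, baselineWeight (ω e) ≤ 0}
      ≤ ENNReal.ofReal ((2 * √(p * (1 - p))) ^ #E) := by
  have := isProbabilityMeasure_bern_s8 hp0.le (by linarith)
  let μ := Measure.pi (fun _ : ι => bern p)
  set t := Real.log (√(p * (1 - p)) / (1 - p))
  have ht : t ≤ 0 := by
    refine Real.log_nonpos (div_nonneg (Real.sqrt_nonneg _) (by linarith))
      ((div_le_one (by linarith)).2 ?_)
    rw [Real.sqrt_le_left (by linarith)]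
    nlinarith
  have hindep : iIndepFun (fun e (ω : ι → Bool) => baselineWeight (ω e)) μ :=
    iIndepFun_pi (X := fun _ => baselineWeight) fun _ => .of_discrete
  have hmgf (e : ι) :
      mgf (fun ω : ι → Bool => baselineWeight (ω e)) μ t = 2 * √(p * (1 - p)) := by
    rw [mgf, integral_comp_eval (μ := fun _ : ι => bern p)
      (f := fun b : Bool => Real.exp (t * baselineWeight b)) .of_discrete,
      ← mgf, mgf_baselineWeight_bern hp0.le (by linarith),
      mul_exp_neg_log_add_mul_exp_log hp0 (by linarith)]
  have hchernoff := measure_le_le_exp_mul_mgf (μ := μ)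
    (X := ∑ e ∈ E, fun ω => baselineWeight (ω e)) 0 ht .of_finite
  rw [hindep.mgf_sum (fun _ => .of_discrete), prod_congr rfl fun e _ => hmgf e, prod_const,
    mul_zero, Real.exp_zero, one_mul] at hchernoff
  rw [← ofReal_measureReal]
  exact ENNReal.ofReal_le_ofReal (by simpa using hchernoff)

lemma mul_min_le_two_mul_mul_sub {s j : ℕ} (hj : j ≤ s) :
    s * min j (s - j) ≤ 2 * (j * (s - j)) := by
  obtain ⟨k, rfl⟩ := Nat.exists_eq_add_of_le hj
  rw [Nat.add_sub_cancel_left]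
  rcases le_total j k with h | h
  · rw [min_eq_left h]; nlinarith
  · rw [min_eq_right h]; nlinarith

lemma pow_mul_sub_le_exp_pow_min {c a : ℝ} (hc0 : 0 ≤ c) (hc : c ≤ Real.exp (-(2 * a)))
    (ha : 0 ≤ a) {s j : ℕ} (hj : j ≤ s) :
    c ^ (j * (s - j)) ≤ Real.exp (-a * s) ^ min j (s - j) := by
  have hcount : (s : ℝ) * (min j (s - j) : ℕ) ≤ 2 * (j * (s - j) : ℕ) := by
    exact_mod_cast mul_min_le_two_mul_mul_sub hj
  calc c ^ (j * (s - j)) ≤ Real.exp (-(2 * a)) ^ (j * (s - j)) := pow_le_pow_left₀ hc0 hc _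
    _ = Real.exp ((j * (s - j) : ℕ) * -(2 * a)) := (Real.exp_nat_mul _ _).symm
    _ ≤ Real.exp ((min j (s - j) : ℕ) * (-a * s)) := 
        Real.exp_le_exp.2 (by nlinarith [mul_le_mul_of_nonneg_left hcount ha])
    _ = Real.exp (-a * s) ^ min j (s - j) := Real.exp_nat_mul _ _

lemma choose_mul_pow_min_le {s j : ℕ} (hj : j ≤ s) {y : ℝ} (hy : 0 ≤ y) :
    s.choose j * y ^ min j (s - j) ≤ (s * y) ^ min j (s - j) := by
  have hchoose : s.choose j = s.choose (min j (s - j)) := by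
    rcases le_total j (s - j) with h | h
    · rw [min_eq_left h]
    · rw [min_eq_right h, Nat.choose_symm hj]
  rw [hchoose, mul_pow]
  gcongr
  exact_mod_cast Nat.choose_le_pow _ _

section Cuts

variable {α : Type*} [DecidableEq α]

def nonemptyProperSubsets (S : Finset α) : Finset (Finset α) :=
  {A ∈ S.powerset | A.Nonempty ∧ A ≠ S}

lemma mem_nonemptyProperSubsets {S A : Finset α} :
    A ∈ nonemptyProperSubsets S ↔ A ⊆ S ∧ A.Nonempty ∧ A ≠ S := by
  rw [nonemptyProperSubsets, mem_filter, mem_powerset]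

def cutEdges (S A : Finset α) : Finset (Sym2 α) :=
  (A ×ˢ (S \ A)).image fun x => s(x.1, x.2)

lemma injOn_sym2_mk_cut (S A : Finset α) :
    Set.InjOn (fun x : α × α => s(x.1, x.2)) (A ×ˢ (S \ A) : Finset (α × α)) := by
  rintro ⟨a, b⟩ hab ⟨a', b'⟩ hab' h
  simp only [coe_product, coe_sdiff, Set.mem_prod, Set.mem_sdiff, mem_coe] at hab hab'
  rcases Sym2.eq_iff.1 h with ⟨rfl, rfl⟩ | ⟨rfl, rfl⟩
  · rfl
  · exact absurd hab.1 hab'.2.2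

lemma card_cutEdges (S A : Finset α) : #(cutEdges S A) = #A * #(S \ A) := by
  rw [cutEdges, card_image_of_injOn (injOn_sym2_mk_cut S A), card_product]

lemma sum_cutEdges {M : Type*} [AddCommMonoid M] (S A : Finset α) (f : Sym2 α → M) :
    ∑ e ∈ cutEdges S A, f e = ∑ u ∈ A, ∑ v ∈ S \ A, f s(u, v) := by
  rw [cutEdges, sum_image (injOn_sym2_mk_cut S A), sum_product]

lemma sum_pow_min_card_le (S : Finset α) {y : ℝ} (hy0 : 0 ≤ y) (hy : #S * y ≤ 1) :
    ∑ A ∈ nonemptyProperSubsets S, y ^ min #A (#S - #A) ≤ (#S + 1) * (#S * y) := by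
  set f : ℕ → ℝ := fun j => if 0 < j ∧ j < #S then y ^ min j (#S - j) else 0
  have hf : ∀ A ∈ S.powerset,
      (if A.Nonempty ∧ A ≠ S then y ^ min #A (#S - #A) else 0) = f #A := by
    intro A hA
    have hAS := mem_powerset.1 hA
    have hlt : #A < #S ↔ A ≠ S := ⟨fun h hAS' => by simp [hAS'] at h,
      fun h => card_lt_card (Finset.ssubset_iff_subset_ne.2 ⟨hAS, h⟩)⟩
    simp only [f, card_pos, hlt]
  have hterm : ∀ j ∈ range (#S + 1), (#S).choose j • f j ≤ #S * y := by
    intro j _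
    rw [nsmul_eq_mul]
    simp only [f]
    split_ifs with h
    · calc (#S).choose j * y ^ min j (#S - j) ≤ (#S * y) ^ min j (#S - j) :=
            choose_mul_pow_min_le h.2.le hy0
        _ ≤ #S * y := pow_le_of_le_one (by positivity) hy (by omega)
    · simpa using by positivity
  calc ∑ A ∈ nonemptyProperSubsets S, y ^ min #A (#S - #A)
      = ∑ A ∈ S.powerset, f #A := by
        rw [nonemptyProperSubsets, sum_filter]; exact sum_congr rfl hf
    _ = ∑ j ∈ range (#S + 1), (#S).choose j • f j := sum_powerset_apply_card f
    _ ≤ ∑ _j ∈ range (#S + 1), #S * y := sum_le_sum hterm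
    _ = (#S + 1) * (#S * y) := by simp

lemma measure_exists_nonpos_cut_le [Fintype α] {p : ℝ}
    (hp0 : 0 < p) (hp : p ≤ 1 / 2) (S : Finset α)
    (hS : #S * Real.exp (-((1 - 2 * p) ^ 2 / 4) * #S) ≤ 1) :
    Measure.pi (fun _ : Sym2 α => bern p)
        {ω | ∃ A ⊆ S, A.Nonempty ∧ A ≠ S ∧
          ∑ u ∈ A, ∑ v ∈ S \ A, baselineWeight (ω s(u, v)) ≤ 0}
      ≤ ENNReal.ofReal ((#S + 1) * (#S * Real.exp (-((1 - 2 * p) ^ 2 / 4) * #S))) := by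
  set y := Real.exp (-((1 - 2 * p) ^ 2 / 4) * #S)
  have hc : 2 * √(p * (1 - p)) ≤ Real.exp (-(2 * ((1 - 2 * p) ^ 2 / 4))) := by
    convert two_mul_sqrt_mul_one_sub_le_exp p using 2; ring
  have hsub : {ω : Sym2 α → Bool | ∃ A ⊆ S, A.Nonempty ∧ A ≠ S ∧
        ∑ u ∈ A, ∑ v ∈ S \ A, baselineWeight (ω s(u, v)) ≤ 0}
      ⊆ ⋃ A ∈ nonemptyProperSubsets S,
        {ω | ∑ e ∈ cutEdges S A, baselineWeight (ω e) ≤ 0} := by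
    rintro ω ⟨A, hAS, hA, hAS', hneg⟩
    exact Set.mem_biUnion (mem_nonemptyProperSubsets.2 ⟨hAS, hA, hAS'⟩)
      ((sum_cutEdges S A fun e => baselineWeight (ω e)).trans_le hneg)
  calc _ ≤ _ := measure_mono hsub
    _ ≤ ∑ A ∈ nonemptyProperSubsets S, Measure.pi (fun _ : Sym2 α => bern p)
          {ω | ∑ e ∈ cutEdges S A, baselineWeight (ω e) ≤ 0} :=
        measure_biUnion_finset_le _ _
    _ ≤ ∑ A ∈ nonemptyProperSubsets S, ENNReal.ofReal (y ^ min #A (#S - #A)) := by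
        refine sum_le_sum fun A hA => (measure_sum_baselineWeight_nonpos_le hp0 hp _).trans
          (ENNReal.ofReal_le_ofReal ?_)
        have hAS := (mem_nonemptyProperSubsets.1 hA).1
        rw [card_cutEdges, card_sdiff_of_subset hAS]
        exact pow_mul_sub_le_exp_pow_min (by positivity) hc (by positivity) (card_le_card hAS)
    _ = ENNReal.ofReal (∑ A ∈ nonemptyProperSubsets S, y ^ min #A (#S - #A)) :=
        (ENNReal.ofReal_sum_of_nonneg fun _ _ => by positivity).symm
    _ ≤ _ := ENNReal.ofReal_le_ofReal (sum_pow_min_card_le S (by positivity) hS)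

end Cuts

lemma exp_neg_mul_le_inv_pow_four {p : ℝ} (hp : p < 1 / 2) {n s : ℕ} (hn : 1 ≤ n)
    (hS : 320 * Real.log n / (1 - 2 * p) ^ 2 ≤ s) :
    Real.exp (-((1 - 2 * p) ^ 2 / 4) * s) ≤ ((n : ℝ) ^ 4)⁻¹ := by
  have hε : 0 < (1 - 2 * p) ^ 2 := pow_pos (by linarith) 2
  have hlog : 0 ≤ Real.log n := Real.log_nonneg (by exact_mod_cast hn)
  have hS' : 320 * Real.log n ≤ (1 - 2 * p) ^ 2 * s := by rwa [div_le_iff₀' hε] at hS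
  calc Real.exp (-((1 - 2 * p) ^ 2 / 4) * s) ≤ Real.exp (-(4 * Real.log n)) :=
        Real.exp_le_exp.2 (by linarith)
    _ = ((n : ℝ) ^ 4)⁻¹ := by
        rw [Real.exp_neg, show (4 : ℝ) * Real.log n = Real.log (n ^ 4) by simp [Real.log_pow],
          Real.exp_log (by positivity)]

lemma add_one_mul_mul_le_inv {s n y : ℝ} (hs : 0 ≤ s) (hsn : s ≤ n) (hn : 2 ≤ n)
    (hy0 : 0 ≤ y) (hy : y ≤ (n ^ 4)⁻¹) : (s + 1) * (s * y) ≤ n⁻¹ := by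
  calc (s + 1) * (s * y) ≤ (n + 1) * (n * (n ^ 4)⁻¹) := by gcongr
    _ ≤ n⁻¹ := by
        rw [show (n + 1) * (n * (n ^ 4)⁻¹) = (n + 1) / n ^ 3 by field_simp,
          div_le_iff₀ (by positivity), inv_mul_eq_div, le_div_iff₀ (by positivity)]
        nlinarith [mul_nonneg (mul_nonneg (sub_nonneg.2 hn) (by linarith : (0 : ℝ) ≤ n + 1))
          (by linarith : (0 : ℝ) ≤ n)]

/-- Lemma `lm clique`: each unordered pair of `S` is corrupted
independently with probability `p` (pattern `ω`); the weight `w ω e` dominates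
pointwise the baseline `x_e = 1` if uncorrupted, `-1` if corrupted.  If
`|S| ≥ 320 log n / (1-2p)²` (and `|S| ≤ n`), then with probability at least
`1 − 1/n`, every nonempty proper subset `A ⊆ S` has a strictly positive cut. -/
theorem stmt8 (N n : ℕ) (p : ℝ) (hp : 0 < p ∧ p < 1/2)
    (S : Finset (Fin N)) (hn : S.card ≤ n)
    (hS : 320 * Real.log n / (1 - 2*p)^2 ≤ (S.card : ℝ))
    (w : (Sym2 (Fin N) → Bool) → Sym2 (Fin N) → ℝ)
    (hw : ∀ ω e, (if ω e then (-1 : ℝ) else 1) ≤ w ω e)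
    (μ : Measure (Sym2 (Fin N) → Bool))
    (hμ : μ = Measure.pi (fun _ => bern p)) :
    1 - ((n : ℝ≥0∞))⁻¹ ≤
      μ {ω | ∀ A : Finset (Fin N), A ⊆ S → A.Nonempty → A ≠ S →
        0 < ∑ u ∈ A, ∑ v ∈ S \ A, w ω (Sym2.mk u v)} := by
  obtain ⟨hp0, hp1⟩ := hp
  subst hμ
  have := isProbabilityMeasure_bern_s8 hp0.le (by linarith)
  rcases lt_or_ge n 2 with hn2 | hn2
  -- for `n ≤ 1` the bound `1 - n⁻¹` is `0` in `ℝ≥0∞` (where `0⁻¹ = ∞`)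
  · interval_cases n <;> simp
  have hy := exp_neg_mul_le_inv_pow_four hp1 (by omega) hS
  have hbound := add_one_mul_mul_le_inv (Nat.cast_nonneg #S) (by exact_mod_cast hn)
    (by exact_mod_cast hn2) (Real.exp_nonneg _) hy
  have hbad := measure_exists_nonpos_cut_le hp0 hp1.le S <|
    (le_mul_of_one_le_left (by positivity) (by linarith)).trans <|
      hbound.trans (inv_le_one_of_one_le₀ (by exact_mod_cast hn2.trans' one_le_two))
  have hinv : ENNReal.ofReal (n : ℝ)⁻¹ = (n : ℝ≥0∞)⁻¹ := by
    rw [ENNReal.ofReal_inv_of_pos (by positivity), ENNReal.ofReal_natCast]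
  refine (tsub_le_tsub_left (hbad.trans (hinv ▸ ENNReal.ofReal_le_ofReal hbound)) 1).trans ?_
  rw [← prob_compl_eq_one_sub .of_discrete]
  exact measure_mono fun ω hω A hAS hA hAS' =>
    (not_le.1 fun hneg => hω ⟨A, hAS, hA, hAS', hneg⟩).trans_le <|
      sum_le_sum fun u _ => sum_le_sum fun v _ => hw ω _
end
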